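/- Let (R, m) be a Noetherian local ring of depth 0. Then the socle Soc(R) = (0 :_R m) is a trace ideal of R, and every nonzero trace ideal of R contains Soc(R). -/

import Mathlib

/-- The trace ideal of an `R`-module `M`. -/
def traceIdeal (R : Type*) [CommRing R] (M : Type*) [AddCommGroup M] [Module R M] : Ideal R :=
  ⨆ f : M →ₗ[R] R, LinearMap.range f

/-! If an ideal `J` annihilates `M`, every map `M → R` lands in `(0 :_R J)`; applied to
`M = (0 :_R J)` itself this makes the socle a trace ideal. Conversely, by Nakayama a nonzero
finitely generated module `M` over a local ring has a surjection `M → R/m`, and composing it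
with `R/m → R, 1 ↦ s` shows that every socle element `s` lies in the trace of `M`. -/

open IsLocalRing

section

variable {R M : Type*} [CommRing R] [AddCommGroup M] [Module R M]

theorem range_le_traceIdeal (f : M →ₗ[R] R) : LinearMap.range f ≤ traceIdeal R M :=
  le_iSup (fun f : M →ₗ[R] R => LinearMap.range f) f

theorem le_traceIdeal (I : Ideal R) : I ≤ traceIdeal R I := by
  simpa using range_le_traceIdeal I.subtype

theorem traceIdeal_le_colon_bot {J : Ideal R} (hJ : ∀ a ∈ J, ∀ x : M, a • x = 0) :
    traceIdeal R M ≤ (⊥ : Ideal R).colon J := by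
  refine iSup_le fun f => ?_
  rintro _ ⟨x, rfl⟩
  refine Submodule.mem_colon.mpr fun a ha => ?_
  rw [Submodule.mem_bot, smul_eq_mul, mul_comm, ← smul_eq_mul, ← map_smul, hJ a ha, map_zero]

theorem traceIdeal_colon_bot (J : Ideal R) :
    traceIdeal R ((⊥ : Ideal R).colon J) = (⊥ : Ideal R).colon J := by
  refine le_antisymm (traceIdeal_le_colon_bot fun a ha x => ?_) (le_traceIdeal _)
  ext
  simpa [mul_comm] using Submodule.mem_colon.mp x.2 a ha

theorem colon_bot_le_traceIdeal {J : Ideal R} (f : M →ₗ[R] R ⧸ J) (x : M) (hx : f x = 1) :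
    (⊥ : Ideal R).colon J ≤ traceIdeal R M := by
  intro s hs
  have hJ : J ≤ LinearMap.ker (LinearMap.toSpanSingleton R R s) := fun a ha => by
    simpa [mul_comm] using Submodule.mem_colon.mp hs a ha
  refine range_le_traceIdeal ((J.liftQ _ hJ).comp f) ⟨x, ?_⟩
  rw [LinearMap.comp_apply, hx, ← map_one (Ideal.Quotient.mk J)]
  exact (J.liftQ_apply _ 1).trans (one_smul R s)

theorem IsLocalRing.exists_linearMap_quotient_maximalIdeal_eq_one [IsLocalRing R]
    [Module.Finite R M] [Nontrivial M] : ∃ (f : M →ₗ[R] R ⧸ maximalIdeal R) (x : M), f x = 1 := by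
  let N : Submodule R M := maximalIdeal R • ⊤
  obtain ⟨x, -, hxN⟩ := SetLike.exists_of_lt (ringJacobson_eq_maximalIdeal (R := R) ▸
    Submodule.jacobson_smul_lt_top (⊤ : Submodule R M))
  let : Field (R ⧸ maximalIdeal R) := Ideal.Quotient.field _
  obtain ⟨φ, hφ⟩ := Module.Projective.exists_dual_eq_one (R ⧸ maximalIdeal R)
    (x := N.mkQ x) (by simpa [N, Submodule.Quotient.mk_eq_zero] using hxN)
  exact ⟨(φ.restrictScalars R).comp N.mkQ, x, hφ⟩

theorem IsLocalRing.colon_bot_maximalIdeal_le_traceIdeal [IsLocalRing R] [Module.Finite R M]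
    [Nontrivial M] : (⊥ : Ideal R).colon (maximalIdeal R) ≤ traceIdeal R M :=
  let ⟨f, x, hx⟩ := exists_linearMap_quotient_maximalIdeal_eq_one (R := R) (M := M)
  colon_bot_le_traceIdeal f x hx

end

theorem socle_traceIdeal_and_minimal_general (R : Type*) [CommRing R] [IsNoetherianRing R]
    [IsLocalRing R] :
    traceIdeal R (Submodule.colon (⊥ : Ideal R) (IsLocalRing.maximalIdeal R)) =
        Submodule.colon (⊥ : Ideal R) (IsLocalRing.maximalIdeal R) ∧
      ∀ I : Ideal R, traceIdeal R I = I → I ≠ ⊥ →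
        Submodule.colon (⊥ : Ideal R) (IsLocalRing.maximalIdeal R) ≤ I := by
  refine ⟨traceIdeal_colon_bot _, fun I hI hI0 => ?_⟩
  have : Nontrivial I := Submodule.nontrivial_iff_ne_bot.mpr hI0
  exact hI ▸ colon_bot_maximalIdeal_le_traceIdeal

/-- Let `(R, m)` be a Noetherian local ring of depth `0`, i.e. the socle
`Soc R = (0 :_R m)` is nonzero. Then `Soc R` is a trace ideal of `R`, and every nonzero
trace ideal of `R` contains `Soc R`. -/
theorem socle_traceIdeal_and_minimal (R : Type*) [CommRing R] [IsNoetherianRing R]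
    [IsLocalRing R]
    (hdepth : Submodule.colon (⊥ : Ideal R) (IsLocalRing.maximalIdeal R) ≠ (⊥ : Ideal R)) :
    traceIdeal R (Submodule.colon (⊥ : Ideal R) (IsLocalRing.maximalIdeal R)) =
        Submodule.colon (⊥ : Ideal R) (IsLocalRing.maximalIdeal R) ∧
      ∀ I : Ideal R, traceIdeal R I = I → I ≠ ⊥ →
        Submodule.colon (⊥ : Ideal R) (IsLocalRing.maximalIdeal R) ≤ I :=
  socle_traceIdeal_and_minimal_general R
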